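/- For a pair (a, x) of coprime integers with 1 ≤ a ≤ x, the numerator of the q-rational x/a satisfies N_q(x/a) = (a, x − a)_q (when x > a), and the denominator satisfies D_q(x/a) = (a − r, r)_q where r is the remainder of x divided by a. -/

import Mathlib

/-!
Write `x = m·a + r` with `0 < r < a`. The first digit of the negative continued fraction of
`x/a` is `m + 1` and the remaining digits are those of `a/(a - r)`, so `N_q` and `D_q` obey the
continuant recursion `N(x/a) = [m+1]_q·N(a/(a-r)) - q^m·D(a/(a-r))`, `D(x/a) = N(a/(a-r))`.
By induction on `a` it therefore suffices that the polynomials `(a, b)_q` obey the same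
recursion: with `s = a - r`,
`(s + r, k(s + r) + r)_q = [k+2]_q·(s, r)_q - q^{k+1}·(s - r mod s, r mod s)_q`.
This follows by induction on `k` from the branch `a < b` of the recursion for `(a, b)_q`; the
base case `k = 0` combines the two branches, which are instances of the single identity
`(a, b)_q = (a - b mod a, b mod a)_q + q^⌈a/b⌉·(a mod b, b - a mod b)_q`.
-/

open Polynomial

/-- The `q`-integer `[c]_q = 1 + q + ⋯ + q^{c-1}` as a polynomial in `ℤ[q]`. -/
noncomputable def qInt (c : ℕ) : Polynomial ℤ := ∑ i ∈ Finset.range c, X ^ i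

/-- The polynomial `(a, b)_q ∈ ℤ[q]` associated to a pair of coprime positive
integers: `(1, n)_q = (n, 1)_q = [n+1]_q`; if `a < b` then
`(a,b)_q = (a-r, r)_q + q·(a, b-a)_q` with `r = b % a`; if `a > b` then
`(a,b)_q = (a-b, b)_q + q^⌈a/b⌉·(r, b-r)_q` with `r = a % b`.
(Values on non-coprime or zero inputs are junk.) -/
noncomputable def W : ℕ → ℕ → Polynomial ℤ
  | 1, b => qInt (b + 1)
  | a, 1 => qInt (a + 1)
  | 0, _ => 0
  | _, 0 => 0
  | a + 2, b + 2 =>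
    if a < b then
      W (a + 2 - (b + 2) % (a + 2)) ((b + 2) % (a + 2)) + X * W (a + 2) (b - a)
    else
      W (a - b) (b + 2) +
        X ^ ((a + 2 + (b + 2) - 1) / (b + 2)) *
          W ((a + 2) % (b + 2)) (b + 2 - (a + 2) % (b + 2))
  termination_by a b => a + b
  decreasing_by
  · have := Nat.mod_lt (b + 2) (show 0 < a + 2 by omega); omega
  · omega
  · omega
  · have := Nat.mod_lt (a + 2) (show 0 < b + 2 by omega); omega

/-- The sequence of digits of the negative continued fraction expansion
`x/a = [c₁, …, c_l]⁻` (each `cᵢ = ⌈·⌉` of the current fraction). By convention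
`ncfDigits x 0 = []` (for `1/0 = ∞`) and `ncfDigits x 1 = [x]`. -/
def ncfDigits : ℕ → ℕ → List ℕ
  | _, 0 => []
  | x, 1 => [x]
  | x, a + 2 =>
      (x + (a + 2) - 1) / (a + 2) ::
        ncfDigits (a + 2) ((x + (a + 2) - 1) / (a + 2) * (a + 2) - x)
  termination_by x a => a
  decreasing_by
    have := Nat.div_mul_le_self (x + (a + 2) - 1) (a + 2); omega

/-- The (coprime) numerator and denominator of the Morier-Genoud–Ovsienko
`q`-deformation of the negative continued fraction `[c₁, …, c_l]⁻`, computed by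
the continuant recursion `(N, D) ↦ ([c]_q·N - q^{c-1}·D, N)`, with `(1, 0)` for
the empty list. -/
noncomputable def qCF : List ℕ → Polynomial ℤ × Polynomial ℤ
  | [] => (1, 0)
  | c :: rest =>
      let p := qCF rest
      (qInt c * p.1 - X ^ (c - 1) * p.2, p.1)

/-- Numerator `N_q(x/a)` of the Morier-Genoud–Ovsienko `q`-rational `[x/a]_q`. -/
noncomputable def Nq (x a : ℕ) : Polynomial ℤ := (qCF (ncfDigits x a)).1

/-- Denominator `D_q(x/a)` of the Morier-Genoud–Ovsienko `q`-rational `[x/a]_q`. -/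
noncomputable def Dq (x a : ℕ) : Polynomial ℤ := (qCF (ncfDigits x a)).2

/-- The normalized Jones polynomial `J_{x/a}(q) = q·N_q(x/a) + (1-q)·D_q(x/a)`. -/
noncomputable def Jq (x a : ℕ) : Polynomial ℤ := X * Nq x a + (1 - X) * Dq x a

lemma qInt_zero : qInt 0 = 0 := rfl

lemma qInt_succ (n : ℕ) : qInt (n + 1) = X * qInt n + 1 := geom_sum_succ

lemma W_one_left (b : ℕ) : W 1 b = qInt (b + 1) := W.eq_1 b

lemma W_one_right (a : ℕ) : W a 1 = qInt (a + 1) := by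
  by_cases h : a = 1
  · subst h; exact W.eq_1 1
  · exact W.eq_2 a h

lemma W_of_lt {a b : ℕ} (ha : 2 ≤ a) (hab : a < b) :
    W a b = W (a - b % a) (b % a) + X * W a (b - a) := by
  obtain ⟨a, rfl⟩ : ∃ c, a = c + 2 := ⟨a - 2, by omega⟩
  obtain ⟨b, rfl⟩ : ∃ c, b = c + 2 := ⟨b - 2, by omega⟩
  rw [W.eq_5, if_pos (by omega), show b - a = b + 2 - (a + 2) by omega]

lemma W_of_gt {a b : ℕ} (hb : 2 ≤ b) (hba : b < a) :
    W a b = W (a - b) b + X ^ ((a + b - 1) / b) * W (a % b) (b - a % b) := by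
  obtain ⟨a, rfl⟩ : ∃ c, a = c + 2 := ⟨a - 2, by omega⟩
  obtain ⟨b, rfl⟩ : ∃ c, b = c + 2 := ⟨b - 2, by omega⟩
  rw [W.eq_5, if_neg (by omega), show a - b = a + 2 - (b + 2) by omega]

lemma W_eq_add {a b : ℕ} (ha : 0 < a) (hb : 2 ≤ b) (hab : a ≠ b) :
    W a b = W (a - b % a) (b % a) + X ^ ((a + b - 1) / b) * W (a % b) (b - a % b) := by
  rcases lt_trichotomy a b with hlt | heq | hgt
  · have hceil : (a + b - 1) / b = 1 := Nat.div_eq_of_lt_le (by omega) (by omega)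
    rw [Nat.mod_eq_of_lt hlt, hceil, pow_one]
    obtain rfl | ha2 := (show 1 ≤ a from ha).eq_or_lt
    · obtain ⟨c, rfl⟩ : ∃ c, b = c + 1 := ⟨b - 1, by omega⟩
      rw [Nat.mod_one, Nat.sub_zero, Nat.add_sub_cancel, W_one_left, W_one_left, W_one_left,
        qInt_succ (c + 1), qInt_succ 0, qInt_zero]
      ring
    · exact W_of_lt ha2 hlt
  · exact absurd heq hab
  · rw [Nat.mod_eq_of_lt hgt]
    exact W_of_gt hb hgt

lemma W_add_self_left {s r : ℕ} (hs : 0 < s) (hr : 0 < r) (hsr : Nat.Coprime s r) :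
    W (s + r) r = qInt 2 * W s r - X * W (s - r % s) (r % s) := by
  rw [qInt_succ 1, qInt_succ 0, qInt_zero]
  obtain rfl | hr2 := (show 1 ≤ r from hr).eq_or_lt
  · have hD : W (s - 1 % s) (1 % s) = qInt s := by
      obtain rfl | hs2 := (show 1 ≤ s from hs).eq_or_lt
      · rw [Nat.mod_one, W_one_left]
      · rw [Nat.mod_eq_of_lt hs2, W_one_right, Nat.sub_add_cancel hs]
    obtain ⟨n, rfl⟩ : ∃ n, s = n + 1 := ⟨s - 1, by omega⟩
    rw [hD, W_one_right, W_one_right, qInt_succ (n + 1 + 1), qInt_succ (n + 1)]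
    ring
  · have hsr' : s ≠ r := fun h => by subst h; rw [Nat.coprime_self] at hsr; omega
    have hceil : (s + r + r - 1) / r = (s + r - 1) / r + 1 := by
      rw [show s + r + r - 1 = s + r - 1 + r by omega, Nat.add_div_right _ (by omega)]
    rw [W_of_gt hr2 (by omega : r < s + r), Nat.add_sub_cancel, Nat.add_mod_right, hceil,
      pow_succ, W_eq_add hs hr2 hsr']
    ring

lemma W_mul_add {s r : ℕ} (hs : 0 < s) (hr : 0 < r) (hsr : Nat.Coprime s r) (k : ℕ) :
    W (s + r) (k * (s + r) + r) =
      qInt (k + 2) * W s r - X ^ (k + 1) * W (s - r % s) (r % s) := by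
  induction k with
  | zero => simpa using W_add_self_left hs hr hsr
  | succ k ih =>
    have hsub : (k + 1) * (s + r) + r - (s + r) = k * (s + r) + r := by rw [Nat.add_mul]; omega
    rw [W_of_lt (by omega) (by rw [Nat.add_mul]; omega), Nat.mul_add_mod_of_lt (by omega),
      Nat.add_sub_cancel, hsub, ih, qInt_succ (k + 2), pow_succ]
    ring

lemma ncfDigits_mul_add {q a r : ℕ} (hr : 0 < r) (hra : r < a) :
    ncfDigits (q * a + r) a = (q + 1) :: ncfDigits a (a - r) := by
  obtain ⟨b, rfl⟩ : ∃ b, a = b + 2 := ⟨a - 2, by omega⟩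
  have hceil : (q * (b + 2) + r + (b + 2) - 1) / (b + 2) = q + 1 :=
    Nat.div_eq_of_lt_le (by rw [Nat.add_mul]; omega) (by rw [Nat.add_mul, Nat.add_mul]; omega)
  have hnext : (q + 1) * (b + 2) - (q * (b + 2) + r) = b + 2 - r := by rw [Nat.add_mul]; omega
  rw [ncfDigits.eq_3, hceil, hnext]

lemma Nq_mul_add {q a r : ℕ} (hr : 0 < r) (hra : r < a) :
    Nq (q * a + r) a = qInt (q + 1) * Nq a (a - r) - X ^ q * Dq a (a - r) := by
  rw [Nq, Nq, Dq, ncfDigits_mul_add hr hra, qCF.eq_2, Nat.add_sub_cancel]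

lemma Dq_mul_add {q a r : ℕ} (hr : 0 < r) (hra : r < a) :
    Dq (q * a + r) a = Nq a (a - r) := by
  rw [Dq, Nq, ncfDigits_mul_add hr hra, qCF.eq_2]

lemma Nq_one_right (x : ℕ) : Nq x 1 = qInt x := by
  simp [Nq, ncfDigits.eq_2, qCF]

lemma Dq_one_right (x : ℕ) : Dq x 1 = 1 := by
  simp [Dq, ncfDigits.eq_2, qCF]

theorem Nq_Dq_eq_W_general (a x : ℕ) (hco : Nat.Coprime a x) (ha : 1 ≤ a) :
    (a < x → Nq x a = W a (x - a)) ∧ Dq x a = W (a - x % a) (x % a) := by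
  induction a using Nat.strong_induction_on generalizing x with
  | _ a ih =>
  obtain rfl | ha2 := ha.eq_or_lt
  · refine ⟨fun hx => ?_, ?_⟩
    · rw [Nq_one_right, W_one_left, Nat.sub_add_cancel hx.le]
    · rw [Dq_one_right, Nat.mod_one, W_one_left, qInt_succ, qInt_zero]
      ring
  obtain ⟨q, r, hra, rfl⟩ : ∃ q r, r < a ∧ x = q * a + r :=
    ⟨x / a, x % a, Nat.mod_lt _ (by omega), (Nat.div_add_mod' x a).symm⟩
  have hcoar : Nat.Coprime a r := (Nat.coprime_mul_right_add_right a r q).mp hco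
  have hr : 0 < r := Nat.pos_of_ne_zero fun h => by
    rw [h, Nat.coprime_zero_right] at hcoar; omega
  obtain ⟨s, rfl⟩ : ∃ s, a = s + r := ⟨a - r, by omega⟩
  have hsr : Nat.Coprime s r := Nat.coprime_add_self_left.mp hcoar
  obtain ⟨ihN, ihD⟩ := ih s (by omega) (s + r) (Nat.coprime_self_add_right.mpr hsr) (by omega)
  rw [Nat.add_sub_cancel_left] at ihN
  rw [Nat.add_mod_left] at ihD
  rw [Nat.mul_add_mod_of_lt hra, Nat.add_sub_cancel, Dq_mul_add hr hra, Nat.add_sub_cancel]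
  refine ⟨fun hlt => ?_, ihN (by omega)⟩
  cases q with
  | zero => omega
  | succ k =>
    rw [Nq_mul_add hr hra, Nat.add_sub_cancel, ihN (by omega), ihD,
      show (k + 1) * (s + r) + r - (s + r) = k * (s + r) + r by rw [Nat.add_mul]; omega,
      W_mul_add (by omega) hr hsr k]

/-- For coprime `1 ≤ a ≤ x`: `N_q(x/a) = (a, x-a)_q` (when `x > a`) and
`D_q(x/a) = (a-r, r)_q` where `r = x % a`. -/
theorem Nq_Dq_eq_W (a x : ℕ) (hco : Nat.Coprime a x) (ha : 1 ≤ a) (hax : a ≤ x) :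
    (a < x → Nq x a = W a (x - a)) ∧ Dq x a = W (a - x % a) (x % a) :=
  Nq_Dq_eq_W_general a x hco ha
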